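/- (All-time near-conservation of energy.) In the setting of Theorem 1 with filters satisfying |ψ₁(ξ)| ≤ c₀, |φ(ξ)| ≤ c₀, |φ(ξ)−1| ≤ c₁|ξ|, and with ω the minimal nonzero frequency, there is a constant C depending only on c₀, c₁, ‖A‖, ‖q_0‖, ‖Ωq_0‖, ‖q̇_0‖ and sup_n ‖q_n‖ such that |H(q_n, q̇_n) − H(q_0, q̇_0)| ≤ C min(h, ω^{-1}) + C h² for all n ∈ ℕ. -/

import Mathlib

open scoped BigOperators

/-- `sinc ξ = sin ξ / ξ` with `sinc 0 = 1`. -/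
noncomputable def sinc (x : ℝ) : ℝ := if x = 0 then 1 else Real.sin x / x

/-- Entrywise (diagonal-matrix) action of a real function family on `ℂ^d`. -/
noncomputable def dOp {d : ℕ} (f : Fin d → ℝ) (q : EuclideanSpace ℂ (Fin d)) :
    EuclideanSpace ℂ (Fin d) := WithLp.toLp 2 (fun i => (f i : ℂ) * q i)

/-- Position update of the trigonometric integrator for the linear force `g(q) = -A q`:
`q_{n+1} = cos(hΩ) q_n + h sinc(hΩ) q̇_n + ½h² sinc(hΩ) Ψ₁ g(Φ q_n)`. -/
noncomputable def trigStepQ {d : ℕ} (h : ℝ) (ω : Fin d → ℝ) (ψ₁ φ : ℝ → ℝ)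
    (A : EuclideanSpace ℂ (Fin d) →L[ℂ] EuclideanSpace ℂ (Fin d))
    (q p : EuclideanSpace ℂ (Fin d)) : EuclideanSpace ℂ (Fin d) :=
  dOp (fun i => Real.cos (h * ω i)) q + h • dOp (fun i => sinc (h * ω i)) p
    + (h ^ 2 / 2) • dOp (fun i => sinc (h * ω i))
        (dOp (fun i => ψ₁ (h * ω i)) (-(A (dOp (fun i => φ (h * ω i)) q))))

/-- Velocity update of the trigonometric integrator for the linear force `g(q) = -A q`:
`q̇_{n+1} = -Ω sin(hΩ) q_n + cos(hΩ) q̇_n + ½h (cos(hΩ) Ψ₁ g(Φ q_n) + Ψ₁ g(Φ q_{n+1}))`. -/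
noncomputable def trigStepP {d : ℕ} (h : ℝ) (ω : Fin d → ℝ) (ψ₁ φ : ℝ → ℝ)
    (A : EuclideanSpace ℂ (Fin d) →L[ℂ] EuclideanSpace ℂ (Fin d))
    (q p : EuclideanSpace ℂ (Fin d)) : EuclideanSpace ℂ (Fin d) :=
  -(dOp (fun i => ω i * Real.sin (h * ω i)) q) + dOp (fun i => Real.cos (h * ω i)) p
    + (h / 2) • (dOp (fun i => Real.cos (h * ω i))
          (dOp (fun i => ψ₁ (h * ω i)) (-(A (dOp (fun i => φ (h * ω i)) q))))
        + dOp (fun i => ψ₁ (h * ω i))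
            (-(A (dOp (fun i => φ (h * ω i)) (trigStepQ h ω ψ₁ φ A q p)))))

/-- The modified energy
`ℋ(q,q̇) = ½‖Ωq‖² + ½‖q̇‖² + ½ Re((cos(hΩ)Φq)* A Φq) − ⅛h²‖Ψ₁ A Φq‖²`. -/
noncomputable def modEnergy {d : ℕ} (h : ℝ) (ω : Fin d → ℝ) (ψ₁ φ : ℝ → ℝ)
    (A : EuclideanSpace ℂ (Fin d) →L[ℂ] EuclideanSpace ℂ (Fin d))
    (q p : EuclideanSpace ℂ (Fin d)) : ℝ :=
  (1 / 2) * ‖dOp ω q‖ ^ 2 + (1 / 2) * ‖p‖ ^ 2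
    + (1 / 2) * (inner (𝕜 := ℂ) (dOp (fun i => Real.cos (h * ω i)) (dOp (fun i => φ (h * ω i)) q))
        (A (dOp (fun i => φ (h * ω i)) q))).re
    - (1 / 8) * h ^ 2 * ‖dOp (fun i => ψ₁ (h * ω i)) (A (dOp (fun i => φ (h * ω i)) q))‖ ^ 2

/-- The total energy `H(q,q̇) = ½‖Ωq‖² + ½‖q̇‖² + ½ q* A q` of `q̈ = -Ω²q - Aq`. -/
noncomputable def energy {d : ℕ} (ω : Fin d → ℝ)
    (A : EuclideanSpace ℂ (Fin d) →L[ℂ] EuclideanSpace ℂ (Fin d))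
    (q p : EuclideanSpace ℂ (Fin d)) : ℝ :=
  (1 / 2) * ‖dOp ω q‖ ^ 2 + (1 / 2) * ‖p‖ ^ 2 + (1 / 2) * (inner (𝕜 := ℂ) q (A q)).re

/-!
The trigonometric integrator is a kick–rotate–kick scheme: with `B = ΦAΦ` and `S = sinc(hΩ)`,
a step is the half kick `p ↦ p - (h/2) S B q`, the exact harmonic flow over time `h`, and a
second half kick. The harmonic flow preserves `½‖Ωq‖² + ½‖p‖²` and is reversible, and the term
`-⅛h²‖S B q‖²` of the modified energy completes the square of each half kick, so the modified
energy is conserved exactly. It differs from `H` by `O(h²)` and by terms controlled by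
`‖(1 - Φ)q‖` and `‖(1 - cos(hΩ)Φ)q‖`. As `|1 - φ(ξ)|` and `|1 - cos ξ φ(ξ)|` are `O(min(|ξ|, 1))`,
these are `O(min(h, ω⁻¹)‖Ωq‖)`, and `‖Ωq_n‖` stays bounded by conservation of the modified
energy together with the bound on `‖q_n‖`.
-/

lemma mul_sinc (x : ℝ) : x * sinc x = Real.sin x := by
  rcases eq_or_ne x 0 with rfl | hx
  · simp
  · rw [sinc, if_neg hx, mul_div_cancel₀ _ hx]

lemma cos_sq_add_mul_sinc_sq (x : ℝ) : Real.cos x ^ 2 + (x * sinc x) ^ 2 = 1 := by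
  rw [mul_sinc, Real.cos_sq_add_sin_sq]

section ComplexInner

variable {E : Type*} [SeminormedAddCommGroup E] [InnerProductSpace ℂ E] (x y : E)

lemma re_inner_real_smul_left (r : ℝ) : (inner ℂ (r • x) y).re = r * (inner ℂ x y).re := by
  rw [RCLike.real_smul_eq_coe_smul (K := ℂ), inner_smul_real_left, Complex.smul_re, smul_eq_mul]

lemma re_inner_real_smul_right (r : ℝ) : (inner ℂ x (r • y)).re = r * (inner ℂ x y).re := by
  rw [RCLike.real_smul_eq_coe_smul (K := ℂ), inner_smul_real_right, Complex.smul_re, smul_eq_mul]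

lemma abs_re_inner_le_norm : |(inner ℂ x y).re| ≤ ‖x‖ * ‖y‖ :=
  (Complex.abs_re_le_norm _).trans (norm_inner_le_norm x y)

end ComplexInner

section DiagonalOperator

variable {d : ℕ} (f g : Fin d → ℝ) (x y : EuclideanSpace ℂ (Fin d))

@[simp]
lemma dOp_apply (i : Fin d) : dOp f x i = f i * x i := rfl

lemma dOp_dOp : dOp f (dOp g x) = dOp (fun i => f i * g i) x := by
  ext i; simp only [dOp_apply]; push_cast; ring

lemma dOp_one_sub : dOp (fun i => 1 - f i) x = x - dOp f x := by
  ext i; simp only [dOp_apply, PiLp.sub_apply]; push_cast; ring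

lemma inner_dOp_left : inner ℂ (dOp f x) y = inner ℂ x (dOp f y) := by
  simp only [PiLp.inner_apply, dOp_apply, RCLike.inner_apply, map_mul, Complex.conj_ofReal]
  exact Finset.sum_congr rfl fun i _ => by ring

lemma norm_dOp_le_of_abs_le {c : ℝ} (hc : 0 ≤ c) (hfg : ∀ i, |f i| ≤ c * |g i|) :
    ‖dOp f x‖ ≤ c * ‖dOp g x‖ := by
  rw [← abs_of_nonneg hc, ← Real.norm_eq_abs, ← norm_smul, EuclideanSpace.norm_eq,
    EuclideanSpace.norm_eq]
  gcongr with i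
  simp only [dOp_apply, PiLp.smul_apply, norm_mul, norm_smul, Complex.norm_real,
    Real.norm_eq_abs, abs_of_nonneg hc, ← mul_assoc]
  exact mul_le_mul_of_nonneg_right (hfg i) (norm_nonneg _)

lemma norm_dOp_le {c : ℝ} (hc : 0 ≤ c) (hf : ∀ i, |f i| ≤ c) : ‖dOp f x‖ ≤ c * ‖x‖ := by
  simpa [EuclideanSpace.norm_eq] using
    norm_dOp_le_of_abs_le f (fun _ => 1) x hc (by simpa using hf)

end DiagonalOperator

section HarmonicFlow

variable {d : ℕ} (h : ℝ) (ω : Fin d → ℝ) (q p : EuclideanSpace ℂ (Fin d))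

/-- The exact flow over time `h` of `q̈ = -Ω²q`; `h sinc(hΩ)` stands for `Ω⁻¹ sin(hΩ)`, which
makes sense also at zero frequencies. -/
noncomputable def harmonicFlow : EuclideanSpace ℂ (Fin d) × EuclideanSpace ℂ (Fin d) :=
  (dOp (fun i => Real.cos (h * ω i)) q + h • dOp (fun i => sinc (h * ω i)) p,
    -dOp (fun i => ω i * Real.sin (h * ω i)) q + dOp (fun i => Real.cos (h * ω i)) p)

lemma harmonicFlow_energy :
    ‖dOp ω (harmonicFlow h ω q p).1‖ ^ 2 + ‖(harmonicFlow h ω q p).2‖ ^ 2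
      = ‖dOp ω q‖ ^ 2 + ‖p‖ ^ 2 := by
  simp only [EuclideanSpace.norm_sq_eq, ← Finset.sum_add_distrib]
  refine Finset.sum_congr rfl fun i _ => ?_
  simp only [harmonicFlow, ← mul_sinc, dOp_apply, PiLp.add_apply, PiLp.neg_apply, PiLp.smul_apply,
    Complex.real_smul, Complex.sq_norm, Complex.normSq_apply, Complex.add_re, Complex.add_im,
    Complex.neg_re, Complex.neg_im, Complex.mul_re, Complex.mul_im, Complex.ofReal_re,
    Complex.ofReal_im]
  linear_combination (ω i ^ 2 * ((q i).re ^ 2 + (q i).im ^ 2) + (p i).re ^ 2 + (p i).im ^ 2)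
    * cos_sq_add_mul_sinc_sq (h * ω i)

lemma harmonicFlow_reverse :
    dOp (fun i => Real.cos (h * ω i)) (harmonicFlow h ω q p).1
      - h • dOp (fun i => sinc (h * ω i)) (harmonicFlow h ω q p).2 = q := by
  ext i
  have hpyth := congrArg Complex.ofReal (cos_sq_add_mul_sinc_sq (h * ω i))
  push_cast at hpyth
  simp only [harmonicFlow, ← mul_sinc, dOp_apply, PiLp.add_apply, PiLp.sub_apply, PiLp.neg_apply,
    PiLp.smul_apply, Complex.real_smul]
  push_cast
  linear_combination q i * hpyth

end HarmonicFlow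

section ModifiedEnergy

variable {d : ℕ} (h : ℝ) (ω : Fin d → ℝ) {ψ₁ φ : ℝ → ℝ}
  (A : EuclideanSpace ℂ (Fin d) →L[ℂ] EuclideanSpace ℂ (Fin d))

/-- The symmetric operator `Φ A Φ`. -/
noncomputable def filteredA (φ : ℝ → ℝ) (x : EuclideanSpace ℂ (Fin d)) :
    EuclideanSpace ℂ (Fin d) :=
  dOp (fun i => φ (h * ω i)) (A (dOp (fun i => φ (h * ω i)) x))

lemma inner_filteredA_left (hA : IsSelfAdjoint A) (x y : EuclideanSpace ℂ (Fin d)) :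
    inner ℂ (filteredA h ω A φ x) y = inner ℂ x (filteredA h ω A φ y) := by
  rw [filteredA, filteredA, inner_dOp_left, ← inner_dOp_left _ x]
  exact hA.isSymmetric _ _

variable (hψ : ∀ ξ, ψ₁ ξ = sinc ξ * φ ξ)
include hψ

lemma dOp_psi_A_dOp_phi (x : EuclideanSpace ℂ (Fin d)) :
    dOp (fun i => ψ₁ (h * ω i)) (A (dOp (fun i => φ (h * ω i)) x))
      = dOp (fun i => sinc (h * ω i)) (filteredA h ω A φ x) := by
  simp only [filteredA, dOp_dOp, hψ]

lemma modEnergy_eq (x y : EuclideanSpace ℂ (Fin d)) :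
    modEnergy h ω ψ₁ φ A x y
      = 1 / 2 * ‖dOp ω x‖ ^ 2 + 1 / 2 * ‖y‖ ^ 2
        + 1 / 2 * (inner ℂ (dOp (fun i => Real.cos (h * ω i)) x) (filteredA h ω A φ x)).re
        - 1 / 8 * h ^ 2 * ‖dOp (fun i => sinc (h * ω i)) (filteredA h ω A φ x)‖ ^ 2 := by
  have hcomm : dOp (fun i => Real.cos (h * ω i)) (dOp (fun i => φ (h * ω i)) x)
      = dOp (fun i => φ (h * ω i)) (dOp (fun i => Real.cos (h * ω i)) x) := by
    simp only [dOp_dOp, mul_comm]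
  rw [modEnergy, dOp_psi_A_dOp_phi h ω A hψ, hcomm, inner_dOp_left, filteredA]

lemma modEnergy_add_kick {s : ℝ} (hs : s ^ 2 = h ^ 2) (x π : EuclideanSpace ℂ (Fin d)) :
    modEnergy h ω ψ₁ φ A x (π + (s / 2) • dOp (fun i => sinc (h * ω i)) (filteredA h ω A φ x))
      = 1 / 2 * ‖dOp ω x‖ ^ 2 + 1 / 2 * ‖π‖ ^ 2
        + 1 / 2 * (inner ℂ (dOp (fun i => Real.cos (h * ω i)) x
            + s • dOp (fun i => sinc (h * ω i)) π) (filteredA h ω A φ x)).re := by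
  rw [modEnergy_eq h ω A hψ, norm_add_sq (𝕜 := ℂ), RCLike.re_to_complex, norm_smul,
    inner_add_left, Complex.add_re, re_inner_real_smul_left, re_inner_real_smul_right,
    inner_dOp_left _ π, Real.norm_eq_abs, mul_pow, sq_abs]
  linear_combination (1 / 8 * ‖dOp (fun i => sinc (h * ω i)) (filteredA h ω A φ x)‖ ^ 2) * hs

variable (q p : EuclideanSpace ℂ (Fin d))

lemma trigStepQ_eq_harmonicFlow :
    trigStepQ h ω ψ₁ φ A q p = (harmonicFlow h ω q
      (p - (h / 2) • dOp (fun i => sinc (h * ω i)) (filteredA h ω A φ q))).1 := by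
  ext i
  simp only [trigStepQ, harmonicFlow, filteredA, hψ, dOp_apply, PiLp.add_apply,
    PiLp.sub_apply, PiLp.neg_apply, PiLp.smul_apply, Complex.real_smul]
  push_cast
  ring

lemma trigStepP_eq_harmonicFlow :
    trigStepP h ω ψ₁ φ A q p = (harmonicFlow h ω q
        (p - (h / 2) • dOp (fun i => sinc (h * ω i)) (filteredA h ω A φ q))).2
      + (-h / 2) • dOp (fun i => sinc (h * ω i))
          (filteredA h ω A φ (trigStepQ h ω ψ₁ φ A q p)) := by
  ext i
  simp only [trigStepP, harmonicFlow, filteredA, hψ, dOp_apply, PiLp.add_apply,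
    PiLp.sub_apply, PiLp.neg_apply, PiLp.smul_apply, Complex.real_smul]
  push_cast
  ring

theorem modEnergy_trigStep (hA : IsSelfAdjoint A) :
    modEnergy h ω ψ₁ φ A (trigStepQ h ω ψ₁ φ A q p) (trigStepP h ω ψ₁ φ A q p)
      = modEnergy h ω ψ₁ φ A q p := by
  rw [trigStepP_eq_harmonicFlow h ω A hψ, trigStepQ_eq_harmonicFlow h ω A hψ]
  set π := p - (h / 2) • dOp (fun i => sinc (h * ω i)) (filteredA h ω A φ q)
  have hp : p = π + (h / 2) • dOp (fun i => sinc (h * ω i)) (filteredA h ω A φ q) := by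
    simp [π]
  set Q := (harmonicFlow h ω q π).1
  -- by reversibility the second half kick produces `⟨q, B Q⟩`, the first one `⟨Q, B q⟩`
  have hsymm : (inner ℂ q (filteredA h ω A φ Q)).re = (inner ℂ Q (filteredA h ω A φ q)).re := by
    rw [← inner_filteredA_left h ω A hA, ← inner_conj_symm, Complex.conj_re]
  rw [modEnergy_add_kick h ω A hψ (neg_sq h), neg_smul, ← sub_eq_add_neg,
    harmonicFlow_reverse, hsymm]
  conv_rhs => rw [hp, modEnergy_add_kick h ω A hψ rfl]
  linear_combination (norm := skip) harmonicFlow_energy h ω q π / 2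
  simp only [Q, harmonicFlow]
  ring

end ModifiedEnergy

lemma min_mul_le_min_inv_mul {h t ωmin : ℝ} (hωmin : 0 < ωmin) (ht : 0 ≤ t)
    (htmin : t ≠ 0 → ωmin ≤ t) : min (h * t) 1 ≤ min h ωmin⁻¹ * t := by
  rcases eq_or_ne t 0 with rfl | ht0
  · simp
  rw [min_mul_of_nonneg _ _ ht]
  refine min_le_min le_rfl ?_
  rw [inv_mul_eq_div, one_le_div hωmin]
  exact htmin ht0

lemma norm_dOp_filter_le {d : ℕ} {g : ℝ → ℝ} {K h ωmin : ℝ} {ω : Fin d → ℝ} (hK : 0 ≤ K)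
    (hg : ∀ ξ, |g ξ| ≤ K * min |ξ| 1) (hh : 0 ≤ h) (hω : ∀ i, 0 ≤ ω i) (hωmin : 0 < ωmin)
    (hmin : ∀ i, ω i ≠ 0 → ωmin ≤ ω i) (x : EuclideanSpace ℂ (Fin d)) :
    ‖dOp (fun i => g (h * ω i)) x‖ ≤ K * min h ωmin⁻¹ * ‖dOp ω x‖ := by
  refine norm_dOp_le_of_abs_le _ _ x (by positivity) fun i => ?_
  calc |g (h * ω i)| ≤ K * min (h * ω i) 1 := by
        simpa [abs_of_nonneg (mul_nonneg hh (hω i))] using hg (h * ω i)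
    _ ≤ K * (min h ωmin⁻¹ * ω i) :=
        mul_le_mul_of_nonneg_left (min_mul_le_min_inv_mul hωmin (hω i) (hmin i)) hK
    _ = K * min h ωmin⁻¹ * |ω i| := by rw [abs_of_nonneg (hω i), mul_assoc]

section FilterBounds

variable {φ : ℝ → ℝ} {c₀ c₁ : ℝ} (hφc : ∀ ξ, |φ ξ| ≤ c₀) (hφ1 : ∀ ξ, |φ ξ - 1| ≤ c₁ * |ξ|)
include hφc hφ1

lemma abs_one_sub_phi_le (ξ : ℝ) : |1 - φ ξ| ≤ (1 + c₀ + c₁) * min |ξ| 1 := by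
  have hc₀ : 0 ≤ c₀ := (abs_nonneg _).trans (hφc 0)
  have hc₁ : 0 ≤ c₁ := by simpa using (abs_nonneg _).trans (hφ1 1)
  rw [mul_min_of_nonneg _ _ (by positivity), mul_one, abs_sub_comm]
  refine le_min ((hφ1 ξ).trans ?_) ?_
  · nlinarith [abs_nonneg ξ]
  · linarith [abs_sub (φ ξ) 1, hφc ξ, abs_one (α := ℝ)]

lemma abs_one_sub_cos_mul_phi_le (ξ : ℝ) :
    |1 - Real.cos ξ * φ ξ| ≤ (1 + c₀ + c₁) * min |ξ| 1 := by
  have hc₀ : 0 ≤ c₀ := (abs_nonneg _).trans (hφc 0)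
  have hc₁ : 0 ≤ c₁ := by simpa using (abs_nonneg _).trans (hφ1 1)
  have hcos : |1 - Real.cos ξ| ≤ |ξ| := by simpa [abs_sub_comm] using Real.abs_cos_sub_cos_le ξ 0
  have hcosφ : |Real.cos ξ * φ ξ| ≤ c₀ := by
    rw [abs_mul]
    exact (mul_le_of_le_one_left (abs_nonneg _) (Real.abs_cos_le_one ξ)).trans (hφc ξ)
  have hsplit : |1 - Real.cos ξ * φ ξ| ≤ |1 - Real.cos ξ| + |φ ξ - 1| := by
    calc |1 - Real.cos ξ * φ ξ| = |(1 - Real.cos ξ) - Real.cos ξ * (φ ξ - 1)| := by ring_nf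
      _ ≤ |1 - Real.cos ξ| + |Real.cos ξ| * |φ ξ - 1| := by
          rw [← abs_mul]; exact abs_sub _ _
      _ ≤ |1 - Real.cos ξ| + |φ ξ - 1| := by
          gcongr; exact mul_le_of_le_one_left (abs_nonneg _) (Real.abs_cos_le_one ξ)
  rw [mul_min_of_nonneg _ _ (by positivity), mul_one]
  refine le_min (hsplit.trans ?_) ?_
  · nlinarith [abs_nonneg ξ, hφ1 ξ]
  · linarith [abs_sub (1 : ℝ) (Real.cos ξ * φ ξ), abs_one (α := ℝ)]

end FilterBounds

section EnergyGap

variable {d : ℕ} {h ωmin c₀ c₁ : ℝ} {ω : Fin d → ℝ} {ψ₁ φ : ℝ → ℝ}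
  (A : EuclideanSpace ℂ (Fin d) →L[ℂ] EuclideanSpace ℂ (Fin d)) (x y : EuclideanSpace ℂ (Fin d))

lemma energy_sub_modEnergy :
    energy ω A x y - modEnergy h ω ψ₁ φ A x y
      = 1 / 2 * (inner ℂ x (A (dOp (fun i => 1 - φ (h * ω i)) x))).re
        + 1 / 2 * (inner ℂ (dOp (fun i => 1 - Real.cos (h * ω i) * φ (h * ω i)) x)
            (A (dOp (fun i => φ (h * ω i)) x))).re
        + 1 / 8 * h ^ 2 * ‖dOp (fun i => ψ₁ (h * ω i)) (A (dOp (fun i => φ (h * ω i)) x))‖ ^ 2 := by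
  rw [energy, modEnergy, dOp_one_sub, dOp_one_sub, map_sub, inner_sub_right, inner_sub_left,
    dOp_dOp]
  simp only [Complex.sub_re]
  ring

lemma norm_A_dOp_phi_le (hφc : ∀ ξ, |φ ξ| ≤ c₀) :
    ‖A (dOp (fun i => φ (h * ω i)) x)‖ ≤ c₀ * ‖A‖ * ‖x‖ := by
  have hc₀ : 0 ≤ c₀ := (abs_nonneg _).trans (hφc 0)
  calc _ ≤ ‖A‖ * ‖dOp (fun i => φ (h * ω i)) x‖ := A.le_opNorm _
    _ ≤ ‖A‖ * (c₀ * ‖x‖) := by gcongr; exact norm_dOp_le _ _ hc₀ fun i => hφc _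
    _ = c₀ * ‖A‖ * ‖x‖ := by ring

lemma norm_dOp_psi_A_dOp_phi_le (hψc : ∀ ξ, |ψ₁ ξ| ≤ c₀) (hφc : ∀ ξ, |φ ξ| ≤ c₀) :
    ‖dOp (fun i => ψ₁ (h * ω i)) (A (dOp (fun i => φ (h * ω i)) x))‖ ≤ c₀ ^ 2 * ‖A‖ * ‖x‖ := by
  have hc₀ : 0 ≤ c₀ := (abs_nonneg _).trans (hφc 0)
  calc _ ≤ c₀ * ‖A (dOp (fun i => φ (h * ω i)) x)‖ := norm_dOp_le _ _ hc₀ fun i => hψc _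
    _ ≤ c₀ * (c₀ * ‖A‖ * ‖x‖) := by gcongr; exact norm_A_dOp_phi_le A x hφc
    _ = c₀ ^ 2 * ‖A‖ * ‖x‖ := by ring

lemma abs_re_inner_cos_phi_le (hφc : ∀ ξ, |φ ξ| ≤ c₀) :
    |(inner ℂ (dOp (fun i => Real.cos (h * ω i)) (dOp (fun i => φ (h * ω i)) x))
        (A (dOp (fun i => φ (h * ω i)) x))).re| ≤ c₀ ^ 2 * ‖A‖ * ‖x‖ ^ 2 := by
  have hc₀ : 0 ≤ c₀ := (abs_nonneg _).trans (hφc 0)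
  have hcos : ‖dOp (fun i => Real.cos (h * ω i)) (dOp (fun i => φ (h * ω i)) x)‖ ≤ c₀ * ‖x‖ := by
    rw [dOp_dOp]
    refine norm_dOp_le _ _ hc₀ fun i => ?_
    rw [abs_mul]
    exact mul_le_of_le_one_left (abs_nonneg _) (Real.abs_cos_le_one _) |>.trans (hφc _)
  calc _ ≤ (c₀ * ‖x‖) * (c₀ * ‖A‖ * ‖x‖) :=
        (abs_re_inner_le_norm _ _).trans (by gcongr; exact norm_A_dOp_phi_le A x hφc)
    _ = c₀ ^ 2 * ‖A‖ * ‖x‖ ^ 2 := by ring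

lemma abs_energy_sub_modEnergy_le (hψc : ∀ ξ, |ψ₁ ξ| ≤ c₀) (hφc : ∀ ξ, |φ ξ| ≤ c₀)
    (hφ1 : ∀ ξ, |φ ξ - 1| ≤ c₁ * |ξ|) (hh : 0 ≤ h) (hω : ∀ i, 0 ≤ ω i) (hωmin : 0 < ωmin)
    (hmin : ∀ i, ω i ≠ 0 → ωmin ≤ ω i) :
    |energy ω A x y - modEnergy h ω ψ₁ φ A x y|
      ≤ 1 / 2 * ((1 + c₀ + c₁) * (1 + c₀) * ‖A‖ * ‖x‖ * ‖dOp ω x‖) * min h ωmin⁻¹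
        + 1 / 8 * h ^ 2 * (c₀ ^ 2 * ‖A‖ * ‖x‖) ^ 2 := by
  have hc₀ : 0 ≤ c₀ := (abs_nonneg _).trans (hφc 0)
  have hc₁ : 0 ≤ c₁ := by simpa using (abs_nonneg _).trans (hφ1 1)
  set δ := (1 + c₀ + c₁) * min h ωmin⁻¹ * ‖dOp ω x‖
  have hδ : 0 ≤ δ := by positivity
  have h₁ : |(inner ℂ x (A (dOp (fun i => 1 - φ (h * ω i)) x))).re| ≤ ‖x‖ * (‖A‖ * δ) := by
    refine (abs_re_inner_le_norm _ _).trans (mul_le_mul_of_nonneg_left ?_ (norm_nonneg _))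
    refine (A.le_opNorm _).trans (mul_le_mul_of_nonneg_left ?_ (norm_nonneg _))
    exact norm_dOp_filter_le (by positivity) (abs_one_sub_phi_le hφc hφ1) hh hω hωmin hmin x
  have h₂ : |(inner ℂ (dOp (fun i => 1 - Real.cos (h * ω i) * φ (h * ω i)) x)
      (A (dOp (fun i => φ (h * ω i)) x))).re| ≤ δ * (c₀ * ‖A‖ * ‖x‖) := by
    refine (abs_re_inner_le_norm _ _).trans (mul_le_mul ?_ (norm_A_dOp_phi_le A x hφc)
      (norm_nonneg _) hδ)
    exact norm_dOp_filter_le (by positivity) (abs_one_sub_cos_mul_phi_le hφc hφ1) hh hω hωmin hmin x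
  have h₃ := norm_dOp_psi_A_dOp_phi_le (h := h) (ω := ω) A x hψc hφc
  rw [energy_sub_modEnergy]
  calc _ ≤ 1 / 2 * (‖x‖ * (‖A‖ * δ)) + 1 / 2 * (δ * (c₀ * ‖A‖ * ‖x‖))
        + 1 / 8 * h ^ 2 * (c₀ ^ 2 * ‖A‖ * ‖x‖) ^ 2 := by
        refine (abs_add_le _ _).trans (add_le_add ((abs_add_le _ _).trans ?_) ?_)
        · rw [abs_mul, abs_mul, abs_of_pos (by norm_num : (0 : ℝ) < 1 / 2)]
          gcongr
        · rw [abs_of_nonneg (by positivity)]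
          gcongr
    _ = _ := by ring

end EnergyGap

section AllTime

variable {d : ℕ} {h ωmin c₀ c₁ M : ℝ} {ω : Fin d → ℝ} {ψ₁ φ : ℝ → ℝ}
  {A : EuclideanSpace ℂ (Fin d) →L[ℂ] EuclideanSpace ℂ (Fin d)}

lemma modEnergy_eq_of_trigStep (hψ : ∀ ξ, ψ₁ ξ = sinc ξ * φ ξ) (hA : IsSelfAdjoint A)
    {q p : ℕ → EuclideanSpace ℂ (Fin d)}
    (hq : ∀ n, q (n + 1) = trigStepQ h ω ψ₁ φ A (q n) (p n))
    (hp : ∀ n, p (n + 1) = trigStepP h ω ψ₁ φ A (q n) (p n)) (n : ℕ) :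
    modEnergy h ω ψ₁ φ A (q n) (p n) = modEnergy h ω ψ₁ φ A (q 0) (p 0) := by
  induction n with
  | zero => rfl
  | succ n ih => rw [hq, hp, modEnergy_trigStep h ω A hψ _ _ hA, ih]

variable {x y x₀ y₀ : EuclideanSpace ℂ (Fin d)}
  (hE : modEnergy h ω ψ₁ φ A x y = modEnergy h ω ψ₁ φ A x₀ y₀) (hx : ‖x‖ ≤ M) (hx₀ : ‖x₀‖ ≤ M)
include hE hx hx₀

lemma sq_norm_dOp_le_of_modEnergy_eq (hψc : ∀ ξ, |ψ₁ ξ| ≤ c₀) (hφc : ∀ ξ, |φ ξ| ≤ c₀)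
    (hh : |h| ≤ 1) :
    ‖dOp ω x‖ ^ 2
      ≤ ‖dOp ω x₀‖ ^ 2 + ‖y₀‖ ^ 2 + 2 * c₀ ^ 2 * ‖A‖ * M ^ 2 + (c₀ ^ 2 * ‖A‖ * M) ^ 2 / 4 := by
  have hcos : ∀ z : EuclideanSpace ℂ (Fin d), ‖z‖ ≤ M →
      |(inner ℂ (dOp (fun i => Real.cos (h * ω i)) (dOp (fun i => φ (h * ω i)) z))
        (A (dOp (fun i => φ (h * ω i)) z))).re| ≤ c₀ ^ 2 * ‖A‖ * M ^ 2 := fun z hz =>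
    (abs_re_inner_cos_phi_le A z hφc).trans (by gcongr)
  have hkick : h ^ 2 * ‖dOp (fun i => ψ₁ (h * ω i)) (A (dOp (fun i => φ (h * ω i)) x))‖ ^ 2
      ≤ (c₀ ^ 2 * ‖A‖ * M) ^ 2 := by
    rw [← one_mul ((c₀ ^ 2 * ‖A‖ * M) ^ 2)]
    refine mul_le_mul (by nlinarith [sq_abs h, abs_nonneg h]) ?_ (by positivity) zero_le_one
    gcongr
    exact (norm_dOp_psi_A_dOp_phi_le A x hψc hφc).trans (by gcongr)
  rw [modEnergy, modEnergy] at hE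
  nlinarith [abs_le.mp (hcos x hx), abs_le.mp (hcos x₀ hx₀), sq_nonneg ‖y‖,
    sq_nonneg (h * ‖dOp (fun i => ψ₁ (h * ω i)) (A (dOp (fun i => φ (h * ω i)) x₀))‖)]

lemma abs_energy_sub_le_of_modEnergy_eq {R : ℝ} (hψc : ∀ ξ, |ψ₁ ξ| ≤ c₀) (hφc : ∀ ξ, |φ ξ| ≤ c₀)
    (hφ1 : ∀ ξ, |φ ξ - 1| ≤ c₁ * |ξ|) (hh : 0 ≤ h) (hω : ∀ i, 0 ≤ ω i) (hωmin : 0 < ωmin)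
    (hmin : ∀ i, ω i ≠ 0 → ωmin ≤ ω i) (hR : ‖dOp ω x‖ ≤ R) (hR₀ : ‖dOp ω x₀‖ ≤ R) :
    |energy ω A x y - energy ω A x₀ y₀|
      ≤ (1 + c₀ + c₁) * (1 + c₀) * ‖A‖ * M * R * min h ωmin⁻¹
        + (c₀ ^ 2 * ‖A‖ * M) ^ 2 / 4 * h ^ 2 := by
  have hc₀ : 0 ≤ c₀ := (abs_nonneg _).trans (hφc 0)
  have hc₁ : 0 ≤ c₁ := by simpa using (abs_nonneg _).trans (hφ1 1)
  have hM : 0 ≤ M := (norm_nonneg _).trans hx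
  have hgap : ∀ z w, ‖z‖ ≤ M → ‖dOp ω z‖ ≤ R →
      |energy ω A z w - modEnergy h ω ψ₁ φ A z w|
        ≤ 1 / 2 * ((1 + c₀ + c₁) * (1 + c₀) * ‖A‖ * M * R) * min h ωmin⁻¹
          + 1 / 8 * h ^ 2 * (c₀ ^ 2 * ‖A‖ * M) ^ 2 := fun z w hz hzR =>
    (abs_energy_sub_modEnergy_le A z w hψc hφc hφ1 hh hω hωmin hmin).trans (by gcongr)
  calc |energy ω A x y - energy ω A x₀ y₀|
      = |(energy ω A x y - modEnergy h ω ψ₁ φ A x y)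
          - (energy ω A x₀ y₀ - modEnergy h ω ψ₁ φ A x₀ y₀)| := by rw [hE]; ring_nf
    _ ≤ _ := (abs_sub _ _).trans (add_le_add (hgap x y hx hR) (hgap x₀ y₀ hx₀ hR₀))
    _ = _ := by ring

end AllTime

noncomputable def energyErrorConstant (c₀ c₁ normA _ normΩq₀ normp₀ M : ℝ) : ℝ :=
  (1 + c₀ + c₁) * (1 + c₀) * normA * M
      * √(normΩq₀ ^ 2 + normp₀ ^ 2 + 2 * c₀ ^ 2 * normA * M ^ 2 + (c₀ ^ 2 * normA * M) ^ 2 / 4)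
    + (c₀ ^ 2 * normA * M) ^ 2

/-- Theorem 2, all-time near-conservation of energy: there is a constant `C`,
depending only on `c₀, c₁, ‖A‖, ‖q_0‖, ‖Ωq_0‖, ‖q̇_0‖` and a bound `M` on `‖q_n‖`, such that
`|H(q_n,q̇_n) − H(q_0,q̇_0)| ≤ C min(h, ω⁻¹) + C h²` for all `n`. -/
theorem all_time_near_conservation_of_energy :
    ∃ C : ℝ → ℝ → ℝ → ℝ → ℝ → ℝ → ℝ → ℝ,
      ∀ {d : ℕ} (h : ℝ), 0 < h → h ≤ 1 →
      ∀ (ω : Fin d → ℝ), (∀ i, 0 ≤ ω i) →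
      ∀ (ψ₁ φ : ℝ → ℝ) (c₀ c₁ : ℝ),
        (∀ ξ : ℝ, ψ₁ ξ = sinc ξ * φ ξ) →
        (∀ ξ : ℝ, |ψ₁ ξ| ≤ c₀) → (∀ ξ : ℝ, |φ ξ| ≤ c₀) →
        (∀ ξ : ℝ, |φ ξ - 1| ≤ c₁ * |ξ|) →
      ∀ ωmin : ℝ, (∃ i, ω i = ωmin) → 0 < ωmin → (∀ i, ω i ≠ 0 → ωmin ≤ ω i) →
      ∀ A : EuclideanSpace ℂ (Fin d) →L[ℂ] EuclideanSpace ℂ (Fin d), IsSelfAdjoint A →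
      ∀ q p : ℕ → EuclideanSpace ℂ (Fin d),
        (∀ n : ℕ, q (n + 1) = trigStepQ h ω ψ₁ φ A (q n) (p n)) →
        (∀ n : ℕ, p (n + 1) = trigStepP h ω ψ₁ φ A (q n) (p n)) →
      ∀ M : ℝ, (∀ n : ℕ, ‖q n‖ ≤ M) →
      ∀ n : ℕ,
        |energy ω A (q n) (p n) - energy ω A (q 0) (p 0)|
          ≤ C c₀ c₁ ‖A‖ ‖q 0‖ ‖dOp ω (q 0)‖ ‖p 0‖ M * min h ωmin⁻¹
            + C c₀ c₁ ‖A‖ ‖q 0‖ ‖dOp ω (q 0)‖ ‖p 0‖ M * h ^ 2 := by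
  refine ⟨energyErrorConstant, ?_⟩
  intro d h h0 h1 ω hω ψ₁ φ c₀ c₁ hψ hψc hφc hφ1 ωmin _ hωmin hmin A hA q p hq hp M hM n
  rw [energyErrorConstant]
  set R := √(‖dOp ω (q 0)‖ ^ 2 + ‖p 0‖ ^ 2 + 2 * c₀ ^ 2 * ‖A‖ * M ^ 2
    + (c₀ ^ 2 * ‖A‖ * M) ^ 2 / 4)
  have hcons := modEnergy_eq_of_trigStep hψ hA hq hp n
  have hR : ∀ m, modEnergy h ω ψ₁ φ A (q m) (p m) = modEnergy h ω ψ₁ φ A (q 0) (p 0) →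
      ‖dOp ω (q m)‖ ≤ R := fun m hm =>
    Real.le_sqrt_of_sq_le (sq_norm_dOp_le_of_modEnergy_eq hm (hM m) (hM 0) hψc hφc
      (abs_le.mpr ⟨by linarith, h1⟩))
  refine (abs_energy_sub_le_of_modEnergy_eq hcons (hM n) (hM 0) hψc hφc hφ1 h0.le hω hωmin
    hmin (hR n hcons) (hR 0 rfl)).trans ?_
  have hc₀ : 0 ≤ c₀ := (abs_nonneg _).trans (hφc 0)
  have hc₁ : 0 ≤ c₁ := by simpa using (abs_nonneg _).trans (hφ1 1)
  have hM0 : 0 ≤ M := (norm_nonneg _).trans (hM 0)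
  have hP : 0 ≤ (1 + c₀ + c₁) * (1 + c₀) * ‖A‖ * M * R := by positivity
  have hmin0 : 0 ≤ min h ωmin⁻¹ := le_min h0.le (inv_nonneg.mpr hωmin.le)
  nlinarith [mul_nonneg (sq_nonneg (c₀ ^ 2 * ‖A‖ * M)) hmin0, mul_nonneg hP (sq_nonneg h),
    mul_nonneg (sq_nonneg (c₀ ^ 2 * ‖A‖ * M)) (sq_nonneg h)]
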